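/- arXiv:0902.4127 — 7 statements merged into one kernel-verified Lean document; each statement's English description precedes it below -/
import Mathlib

section
/- The square loss function λ(γ,ω) = (ω-γ)² is 2-mixable: the image of its superprediction set under the map E₂(x,y) = (e^{-2x}, e^{-2y}) is convex. -/
/-!
The `E₂`-image of the superprediction set is the part of the open positive quadrant lying
below the curve `c(γ) = (e^{-2γ²}, e^{-2(1-γ)²})`, `γ ∈ [0,1]`. At every `c(a)` the line with
normal `((1-a) e^{4a-2}, a)` supports the whole curve: after the substitution `s = 4(γ-a)` this
is Hoeffding's lemma `1 - a + a e^s ≤ e^{as + s²/8}` for a Bernoulli variable. A convex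
combination `q` of curve points therefore lies below all these lines and has
`e^{-2} ≤ q.2 / q.1 ≤ e^2`; at the `γ` with `e^{4γ-2} = q.2 / q.1`, where `c(γ)` has the same
ratio as `q`, the supporting line gives `q ≤ c(γ)`.
-/

open Set Real MeasureTheory ProbabilityTheory

lemma one_sub_add_mul_exp_le {a : ℝ} (ha : a ∈ Icc (0:ℝ) 1) (s : ℝ) :
    1 - a + a * exp s ≤ exp (a * s + s ^ 2 / 8) := by
  have hbound : ∀ᵐ x ∂Ber((1:ℝ), 0, ⟨a, ha⟩), x ∈ Icc (0:ℝ) 1 := by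
    rw [ae_iff]
    exact bernoulliMeasure_apply_of_notMem_of_notMem _ measurableSet_Icc.compl (by simp) (by simp)
  have hmgf := (hasSubgaussianMGF_of_mem_Icc aemeasurable_id hbound).mgf_le s
  norm_num [mgf, integral_bernoulliMeasure] at hmgf
  have h₁ : exp (s * (1 - a)) * exp (a * s) = exp s := by rw [← exp_add]; ring_nf
  have h₀ : exp (-(s * a)) * exp (a * s) = 1 := by rw [← exp_add, ← exp_zero]; ring_nf
  calc 1 - a + a * exp s
      = (a * exp (s * (1 - a)) + (1 - a) * exp (-(s * a))) * exp (a * s) := by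
        linear_combination (-a) * h₁ - (1 - a) * h₀
    _ ≤ exp (s ^ 2 / 8) * exp (a * s) := by
        gcongr
        exact hmgf.trans_eq (by ring_nf)
    _ = exp (a * s + s ^ 2 / 8) := by rw [← exp_add, add_comm]

noncomputable section

-- `expMap η` is `E_η`, and `superpredictionSet ℓ₀ ℓ₁` is `Σ_λ` for `ℓᵢ = λ(·, i)`.
def expMap (η : ℝ) (p : ℝ × ℝ) : ℝ × ℝ := (exp (-η * p.1), exp (-η * p.2))

def superpredictionSet (ℓ₀ ℓ₁ : ℝ → ℝ) : Set (ℝ × ℝ) :=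
  {p | 0 ≤ p.1 ∧ 0 ≤ p.2 ∧ ∃ γ ∈ Icc (0:ℝ) 1, ℓ₀ γ ≤ p.1 ∧ ℓ₁ γ ≤ p.2}

lemma le_neg_log_div_iff {η x y : ℝ} (hη : 0 < η) (hx : 0 < x) :
    y ≤ -log x / η ↔ x ≤ exp (-η * y) := by
  rw [le_div_iff₀ hη, ← log_le_iff_le_exp hx]
  constructor <;> intro h <;> linarith

lemma image_expMap_superpredictionSet {η : ℝ} (hη : 0 < η) {ℓ₀ ℓ₁ : ℝ → ℝ}
    (hℓ₀ : ∀ γ ∈ Icc (0:ℝ) 1, 0 ≤ ℓ₀ γ) (hℓ₁ : ∀ γ ∈ Icc (0:ℝ) 1, 0 ≤ ℓ₁ γ) :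
    expMap η '' superpredictionSet ℓ₀ ℓ₁ =
      {q | 0 < q.1 ∧ 0 < q.2 ∧ ∃ γ ∈ Icc (0:ℝ) 1, q ≤ expMap η (ℓ₀ γ, ℓ₁ γ)} := by
  ext q
  constructor
  · rintro ⟨p, ⟨-, -, γ, hγ, h₀, h₁⟩, rfl⟩
    exact ⟨exp_pos _, exp_pos _, γ, hγ, exp_le_exp.2 (by nlinarith), exp_le_exp.2 (by nlinarith)⟩
  · rintro ⟨hq₁, hq₂, γ, hγ, h₀, h₁⟩
    have h₀' := (le_neg_log_div_iff hη hq₁).2 h₀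
    have h₁' := (le_neg_log_div_iff hη hq₂).2 h₁
    refine ⟨(-log q.1 / η, -log q.2 / η),
      ⟨(hℓ₀ γ hγ).trans h₀', (hℓ₁ γ hγ).trans h₁', γ, hγ, h₀', h₁'⟩, ?_⟩
    have hinv : ∀ x > 0, exp (-η * (-log x / η)) = x := fun x hx => by
      rw [show -η * (-log x / η) = log x by field_simp, exp_log hx]
    simp only [expMap, hinv _ hq₁, hinv _ hq₂]

namespace SquareLoss

def curve (γ : ℝ) : ℝ × ℝ := (exp (-2 * γ ^ 2), exp (-2 * (1 - γ) ^ 2))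

def region : Set (ℝ × ℝ) :=
  {q | 0 < q.1 ∧ exp (-2) * q.1 ≤ q.2 ∧ q.2 ≤ exp 2 * q.1 ∧
    ∀ a ∈ Icc (0:ℝ) 1, a * q.2 + (1 - a) * exp (4 * a - 2) * q.1 ≤ exp (-2 * (1 - a) ^ 2)}

lemma curve_snd (γ : ℝ) : (curve γ).2 = exp (4 * γ - 2) * (curve γ).1 := by
  simp only [curve, ← exp_add]
  ring_nf

lemma supporting_line {a : ℝ} (ha : a ∈ Icc (0:ℝ) 1) (γ : ℝ) :
    a * (curve γ).2 + (1 - a) * exp (4 * a - 2) * (curve γ).1 ≤ exp (-2 * (1 - a) ^ 2) := by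
  set s := 4 * (γ - a)
  set K := exp (-(a * s + s ^ 2 / 8) - 2 * (1 - a) ^ 2)
  have h₂ : (curve γ).2 = exp s * K := by
    simp only [curve, K, s, ← exp_add]; ring_nf
  have h₁ : exp (4 * a - 2) * (curve γ).1 = K := by
    simp only [curve, K, s, ← exp_add]; ring_nf
  calc a * (curve γ).2 + (1 - a) * exp (4 * a - 2) * (curve γ).1
      = (1 - a + a * exp s) * K := by rw [h₂, mul_assoc (1 - a), h₁]; ring
    _ ≤ exp (a * s + s ^ 2 / 8) * K := by gcongr; exact one_sub_add_mul_exp_le ha s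
    _ = exp (-2 * (1 - a) ^ 2) := by rw [← exp_add]; ring_nf

lemma curve_mem_region {γ : ℝ} (hγ : γ ∈ Icc (0:ℝ) 1) : curve γ ∈ region := by
  refine ⟨exp_pos _, ?_, ?_, fun a ha => supporting_line ha γ⟩ <;> rw [curve_snd]
  · exact mul_le_mul_of_nonneg_right (exp_le_exp.2 (by linarith [hγ.1])) (exp_pos _).le
  · exact mul_le_mul_of_nonneg_right (exp_le_exp.2 (by linarith [hγ.2])) (exp_pos _).le

lemma convex_region : Convex ℝ region := by
  rintro q ⟨hq₁, hq_lo, hq_hi, hq⟩ r ⟨hr₁, hr_lo, hr_hi, hr⟩ s t hs ht hst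
  simp only [region, mem_ofPred_eq, Prod.fst_add, Prod.snd_add, Prod.smul_fst, Prod.smul_snd,
    smul_eq_mul]
  refine ⟨?_, ?_, ?_, fun a ha => ?_⟩
  · exact convex_Ioi (0:ℝ) hq₁ hr₁ hs ht hst
  · nlinarith
  · nlinarith
  · nlinarith [mul_le_mul_of_nonneg_left (hq a ha) hs, mul_le_mul_of_nonneg_left (hr a ha) ht,
      congrArg (· * exp (-2 * (1 - a) ^ 2)) hst]

lemma exists_le_curve_of_mem_region {q : ℝ × ℝ} (hq : q ∈ region) :
    ∃ γ ∈ Icc (0:ℝ) 1, q ≤ curve γ := by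
  obtain ⟨hq₁, hlo, hhi, hsupp⟩ := hq
  have hq₂ : 0 < q.2 := lt_of_lt_of_le (by positivity) hlo
  set γ := 1 / 2 + (log q.2 - log q.1) / 4 with hγdef
  have hratio : exp (4 * γ - 2) * q.1 = q.2 := by
    rw [show 4 * γ - 2 = log q.2 - log q.1 by ring, exp_sub, exp_log hq₁, exp_log hq₂]
    field_simp
  have hγ : γ ∈ Icc (0:ℝ) 1 := by
    have hlo' := log_le_log (by positivity) hlo
    have hhi' := log_le_log hq₂ hhi
    rw [log_mul (exp_pos _).ne' hq₁.ne', log_exp] at hlo' hhi'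
    constructor <;> linarith [hγdef]
  have h₂ : q.2 ≤ (curve γ).2 := by
    have := hsupp γ hγ
    rw [mul_assoc (1 - γ), hratio] at this
    exact (by linarith : q.2 ≤ exp (-2 * (1 - γ) ^ 2))
  have h₁ : q.1 ≤ (curve γ).1 := by
    rw [← hratio, curve_snd] at h₂
    exact le_of_mul_le_mul_left h₂ (exp_pos _)
  exact ⟨γ, hγ, h₁, h₂⟩

lemma convex_setOf_le_curve :
    Convex ℝ {q : ℝ × ℝ | 0 < q.1 ∧ 0 < q.2 ∧ ∃ γ ∈ Icc (0:ℝ) 1, q ≤ curve γ} := by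
  rintro q ⟨hq₁, hq₂, γ, hγ, hq⟩ r ⟨hr₁, hr₂, δ, hδ, hr⟩ s t hs ht hst
  obtain ⟨ε, hε, hle⟩ := exists_le_curve_of_mem_region
    (convex_region (curve_mem_region hγ) (curve_mem_region hδ) hs ht hst)
  have hpos := (convex_Ioi (0:ℝ)).prod (convex_Ioi (0:ℝ)) ⟨hq₁, hq₂⟩ ⟨hr₁, hr₂⟩ hs ht hst
  exact ⟨hpos.1, hpos.2, ε, hε, (add_le_add (smul_le_smul_of_nonneg_left hq hs)
    (smul_le_smul_of_nonneg_left hr ht)).trans hle⟩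

end SquareLoss

end

/-- The square loss function is 2-mixable: the image of its superprediction set
`{(x,y) ∈ [0,∞)² : ∃ γ ∈ [0,1], γ² ≤ x ∧ (1-γ)² ≤ y}` under
`E₂(x,y) = (e^{-2x}, e^{-2y})` is convex. -/
theorem squareLoss_two_mixable :
    Convex ℝ ((fun p : ℝ × ℝ => (Real.exp (-2 * p.1), Real.exp (-2 * p.2))) ''
      {p : ℝ × ℝ | 0 ≤ p.1 ∧ 0 ≤ p.2 ∧
        ∃ γ ∈ Icc (0:ℝ) 1, γ ^ 2 ≤ p.1 ∧ (1 - γ) ^ 2 ≤ p.2}) := by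
  change Convex ℝ (expMap 2 '' superpredictionSet (· ^ 2) (fun γ => (1 - γ) ^ 2))
  rw [image_expMap_superpredictionSet two_pos (fun γ _ => sq_nonneg γ) (fun γ _ => sq_nonneg _)]
  exact SquareLoss.convex_setOf_le_curve
end

section
/- Let λ be an η-mixable proper loss function with finite losses on (0,1), and let π ∈ (0,1) and γ ∈ (0,1). Then π·exp(η(λ(π,1) - λ(γ,1))) + (1-π)·exp(η(λ(π,0) - λ(γ,0))) ≤ 1. -/
open ENNReal Set

/-- A loss function `l : [0,1] × {0,1} → [0,∞]` is a proper scoring rule. -/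
def IsProper (l : ℝ → Bool → ℝ≥0∞) : Prop :=
  ∀ π ∈ Set.Icc (0:ℝ) 1, ∀ π' ∈ Set.Icc (0:ℝ) 1,
    ENNReal.ofReal π * l π true + ENNReal.ofReal (1 - π) * l π false ≤
      ENNReal.ofReal π * l π' true + ENNReal.ofReal (1 - π) * l π' false

/-- The superprediction set of a loss function, as a subset of `[0,∞)² ⊆ ℝ²`. -/
def Superpred (l : ℝ → Bool → ℝ≥0∞) : Set (ℝ × ℝ) :=
  {p | 0 ≤ p.1 ∧ 0 ≤ p.2 ∧ ∃ γ ∈ Set.Icc (0:ℝ) 1,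
    l γ false ≤ ENNReal.ofReal p.1 ∧ l γ true ≤ ENNReal.ofReal p.2}

/-- `l` is `η`-mixable if the image of its superprediction set under
`E_η(x,y) = (e^{-ηx}, e^{-ηy})` is convex. -/
def Mixable (η : ℝ) (l : ℝ → Bool → ℝ≥0∞) : Prop :=
  Convex ℝ ((fun p : ℝ × ℝ => (Real.exp (-η * p.1), Real.exp (-η * p.2))) '' Superpred l)

/-!
Write `A = e^{-ηλ(π,·)}` and `C = e^{-ηλ(γ,·)}`. By mixability each point `(1-t)A + tC`,
`t ∈ [0,1]`, is the image of a superprediction, and by propriety the `π`-expected loss of that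
superprediction is at least that of `λ(π,·)`. Taking logarithms, the function
`g(t) = π log(1 + t(C₁/A₁ - 1)) + (1-π) log(1 + t(C₀/A₀ - 1))` is at most `g(0) = 0` on `[0,1]`,
hence `g'(0) = π C₁/A₁ + (1-π) C₀/A₀ - 1 ≤ 0`.
-/

open Filter Topology

theorem HasDerivWithinAt.nonpos_of_eventually_le {f : ℝ → ℝ} {f' a : ℝ}
    (hf : HasDerivWithinAt f f' (Ioi a) a) (h : ∀ᶠ x in 𝓝[>] a, f x ≤ f a) : f' ≤ 0 := by
  refine le_of_tendsto ((hasDerivWithinAt_iff_tendsto_slope' self_notMem_Ioi).mp hf) ?_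
  filter_upwards [h, self_mem_nhdsWithin] with x hfx hx
  rw [slope_def_field]
  exact div_nonpos_of_nonpos_of_nonneg (sub_nonpos.mpr hfx) (sub_nonneg.mpr hx.le)

theorem weighted_add_le_one_of_log_le_zero {w p q : ℝ}
    (h : ∀ t ∈ Ioc (0:ℝ) 1,
      w * Real.log (1 + t * (p - 1)) + (1 - w) * Real.log (1 + t * (q - 1)) ≤ 0) :
    w * p + (1 - w) * q ≤ 1 := by
  have hlog (r : ℝ) : HasDerivAt (fun t => Real.log (1 + t * (r - 1))) (r - 1) 0 := by
    simpa using ((hasDerivAt_id (0:ℝ)).mul_const (r - 1)).const_add 1 |>.log (by simp)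
  have hderiv := (((hlog p).const_mul w).add ((hlog q).const_mul (1 - w))).hasDerivWithinAt
    (s := Ioi 0)
  have := hderiv.nonpos_of_eventually_le <| by
    filter_upwards [Ioc_mem_nhdsGT zero_lt_one] with t ht
    simpa using h t ht
  linarith

theorem log_one_add_mul_exp_sub_one {η a c z t : ℝ}
    (h : Real.exp (-η * z) = (1 - t) * Real.exp (-η * a) + t * Real.exp (-η * c)) :
    Real.log (1 + t * (Real.exp (η * (a - c)) - 1)) = η * (a - z) := by
  rw [← Real.log_exp (η * (a - z)), show η * (a - z) = -η * z - -η * a by ring, Real.exp_sub, h,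
    show η * (a - c) = -η * c - -η * a by ring, Real.exp_sub]
  congr 1
  field_simp
  ring

section

variable {l : ℝ → Bool → ℝ≥0∞}

theorem toReal_mem_superpred {γ : ℝ} (hγ : γ ∈ Icc (0:ℝ) 1) (hfin : ∀ ω, l γ ω ≠ ⊤) :
    ((l γ false).toReal, (l γ true).toReal) ∈ Superpred l :=
  ⟨toReal_nonneg, toReal_nonneg, γ, hγ, (ofReal_toReal (hfin false)).ge,
    (ofReal_toReal (hfin true)).ge⟩

theorem IsProper.expected_toReal_le (hproper : IsProper l) {π : ℝ} (hπ : π ∈ Icc (0:ℝ) 1)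
    (hfin : ∀ ω, l π ω ≠ ⊤) {p : ℝ × ℝ} (hp : p ∈ Superpred l) :
    π * (l π true).toReal + (1 - π) * (l π false).toReal ≤ π * p.2 + (1 - π) * p.1 := by
  obtain ⟨hx, hy, γ, hγ, h0, h1⟩ := hp
  have hπ' : 0 ≤ 1 - π := sub_nonneg.mpr hπ.2
  have hle : ENNReal.ofReal π * l π true + ENNReal.ofReal (1 - π) * l π false ≤
      ENNReal.ofReal (π * p.2 + (1 - π) * p.1) :=
    calc _ ≤ ENNReal.ofReal π * l γ true + ENNReal.ofReal (1 - π) * l γ false :=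
          hproper π hπ γ hγ
      _ ≤ ENNReal.ofReal π * ENNReal.ofReal p.2 + ENNReal.ofReal (1 - π) * ENNReal.ofReal p.1 := by
          gcongr
      _ = _ := by
          rw [← ofReal_mul hπ.1, ← ofReal_mul hπ',
            ← ofReal_add (mul_nonneg hπ.1 hy) (mul_nonneg hπ' hx)]
  have := toReal_le_of_le_ofReal (add_nonneg (mul_nonneg hπ.1 hy) (mul_nonneg hπ' hx)) hle
  rwa [toReal_add (mul_ne_top ofReal_ne_top (hfin true)) (mul_ne_top ofReal_ne_top (hfin false)),
    toReal_mul, toReal_mul, toReal_ofReal hπ.1, toReal_ofReal hπ'] at this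

theorem Mixable.exists_mem_superpred {η : ℝ} (hmix : Mixable η l) {p q : ℝ × ℝ}
    (hp : p ∈ Superpred l) (hq : q ∈ Superpred l) {t : ℝ} (ht : t ∈ Icc (0:ℝ) 1) :
    ∃ z ∈ Superpred l,
      Real.exp (-η * z.1) = (1 - t) * Real.exp (-η * p.1) + t * Real.exp (-η * q.1) ∧
      Real.exp (-η * z.2) = (1 - t) * Real.exp (-η * p.2) + t * Real.exp (-η * q.2) := by
  obtain ⟨z, hz, hzeq⟩ := hmix ⟨p, hp, rfl⟩ ⟨q, hq, rfl⟩ (sub_nonneg.mpr ht.2) ht.1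
    (sub_add_cancel 1 t)
  exact ⟨z, hz, congrArg Prod.fst hzeq, congrArg Prod.snd hzeq⟩

theorem IsProper.log_mix_le_zero {η : ℝ} (hproper : IsProper l)
    (hmix : Mixable η l) (hη : 0 ≤ η) {π : ℝ} (hπ : π ∈ Icc (0:ℝ) 1) (hfin : ∀ ω, l π ω ≠ ⊤)
    {q : ℝ × ℝ} (hq : q ∈ Superpred l) {t : ℝ} (ht : t ∈ Icc (0:ℝ) 1) :
    π * Real.log (1 + t * (Real.exp (η * ((l π true).toReal - q.2)) - 1)) +
      (1 - π) * Real.log (1 + t * (Real.exp (η * ((l π false).toReal - q.1)) - 1)) ≤ 0 := by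
  obtain ⟨z, hz, hz₁, hz₂⟩ := hmix.exists_mem_superpred (toReal_mem_superpred hπ hfin) hq ht
  rw [log_one_add_mul_exp_sub_one hz₁, log_one_add_mul_exp_sub_one hz₂]
  linarith [mul_le_mul_of_nonneg_left (hproper.expected_toReal_le hπ hfin hz) hη]

end

theorem one_step_supermartingale_general (l : ℝ → Bool → ℝ≥0∞) (η : ℝ) (hη : 0 < η)
    (hproper : IsProper l) (hmix : Mixable η l)
    (hfin : ∀ γ ∈ Ioo (0:ℝ) 1, ∀ ω : Bool, l γ ω ≠ ⊤) :
    ∀ π ∈ Ioo (0:ℝ) 1, ∀ γ ∈ Ioo (0:ℝ) 1,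
      π * Real.exp (η * ((l π true).toReal - (l γ true).toReal)) +
        (1 - π) * Real.exp (η * ((l π false).toReal - (l γ false).toReal)) ≤ 1 := by
  intro π hπ γ hγ
  have hγ_mem := toReal_mem_superpred (Ioo_subset_Icc_self hγ) (hfin γ hγ)
  exact weighted_add_le_one_of_log_le_zero fun t ht =>
    hproper.log_mix_le_zero hmix hη.le (Ioo_subset_Icc_self hπ) (hfin π hπ) hγ_mem
      (Ioc_subset_Icc_self ht)

/-- The one-step supermartingale inequality: for an `η`-mixable proper loss function with
finite losses on `(0,1)`,
`π·e^{η(λ(π,1)-λ(γ,1))} + (1-π)·e^{η(λ(π,0)-λ(γ,0))} ≤ 1` for `π, γ ∈ (0,1)`. -/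
theorem one_step_supermartingale (l : ℝ → Bool → ℝ≥0∞) (η : ℝ) (hη : 0 < η)
    (hproper : IsProper l) (hmix : Mixable η l)
    (hcont : ∀ ω : Bool, ContinuousOn (fun γ : ℝ => l γ ω) (Icc (0:ℝ) 1))
    (hfin : ∀ γ ∈ Ioo (0:ℝ) 1, ∀ ω : Bool, l γ ω ≠ ⊤) :
    ∀ π ∈ Ioo (0:ℝ) 1, ∀ γ ∈ Ioo (0:ℝ) 1,
      π * Real.exp (η * ((l π true).toReal - (l γ true).toReal)) +
        (1 - π) * Real.exp (η * ((l π false).toReal - (l γ false).toReal)) ≤ 1 :=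
  one_step_supermartingale_general l η hη hproper hmix hfin
end

section
/- Let λ be an η-mixable proper loss function, continuous in γ, with λ(π,0), λ(π,1) finite for π ∈ (0,1). Then for each π ∈ (0,1), the superprediction set Σ_λ lies Northeast of the shift of the curve e^{-ηx} + e^{-ηy} = 1 by the vector (λ(π,0) + (1/η)ln(1-π), λ(π,1) + (1/η)ln π); that is, every (x,y) ∈ Σ_λ satisfies (1-π)·e^{-η(x-λ(π,0))} + π·e^{-η(y-λ(π,1))} ≤ 1. -/
/-!
Write `E(x, y) = (e^{-ηx}, e^{-ηy})`. Since `η > 0`, properness says that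
`E(λ(π,0), λ(π,1))` maximises the weighted log-likelihood `(1-π) log z₁ + π log z₂` over
`E(Σ_λ)`. Mixability makes `E(Σ_λ)` convex, so the first-order condition at this maximiser, in
the direction of `E(p)` for any `p ∈ Σ_λ`, holds; written out, it is the claimed inequality.
-/

open ENNReal Set

theorem Convex.weighted_ratio_le_of_isMaxOn_weighted_log {S : Set (ℝ × ℝ)} (hS : Convex ℝ S)
    {u v : ℝ × ℝ} (hu : u ∈ S) (hv : v ∈ S) (hu₁ : u.1 ≠ 0) (hu₂ : u.2 ≠ 0) {α β : ℝ}
    (hmax : IsMaxOn (fun z : ℝ × ℝ => α * Real.log z.1 + β * Real.log z.2) S u) :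
    α * (v.1 / u.1) + β * (v.2 / u.2) ≤ α + β := by
  have hderiv := (((hasFDerivAt_fst.log hu₁).const_mul α).add
    ((hasFDerivAt_snd.log hu₂).const_mul β)).hasFDerivWithinAt (s := S)
  have hfirstOrder := hmax.localize.hasFDerivWithinAt_nonpos hderiv
    (sub_mem_posTangentConeAt_of_segment_subset (hS.segment_subset hu hv))
  simp only [add_apply, smul_apply, ContinuousLinearMap.coe_fst', ContinuousLinearMap.coe_snd',
    Prod.fst_sub, Prod.snd_sub, smul_eq_mul, mul_sub, inv_mul_cancel₀ hu₁, inv_mul_cancel₀ hu₂,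
    inv_mul_eq_div] at hfirstOrder
  linarith

variable {l : ℝ → Bool → ℝ≥0∞} {π : ℝ}

theorem toReal_mem_superpred_s10 (hπ : π ∈ Icc (0:ℝ) 1) (h₀ : l π false ≠ ⊤) (h₁ : l π true ≠ ⊤) :
    ((l π false).toReal, (l π true).toReal) ∈ Superpred l :=
  ⟨toReal_nonneg, toReal_nonneg, π, hπ, (ofReal_toReal h₀).ge, (ofReal_toReal h₁).ge⟩

theorem IsProper.weighted_toReal_le (hproper : IsProper l) (hπ : π ∈ Icc (0:ℝ) 1)
    (h₀ : l π false ≠ ⊤) (h₁ : l π true ≠ ⊤) {q : ℝ × ℝ} (hq : q ∈ Superpred l) :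
    (1 - π) * (l π false).toReal + π * (l π true).toReal ≤ (1 - π) * q.1 + π * q.2 := by
  obtain ⟨hq₁, hq₂, γ, hγ, hγ₀, hγ₁⟩ := hq
  have h1π : 0 ≤ 1 - π := sub_nonneg.2 hπ.2
  have hle := (hproper π hπ γ hγ).trans (add_le_add (mul_le_mul_right hγ₁ _) (mul_le_mul_right hγ₀ _))
  rw [← ofReal_toReal h₀, ← ofReal_toReal h₁, ← ofReal_mul hπ.1, ← ofReal_mul h1π,
    ← ofReal_mul hπ.1, ← ofReal_mul h1π,
    ← ofReal_add (mul_nonneg hπ.1 toReal_nonneg) (mul_nonneg h1π toReal_nonneg),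
    ← ofReal_add (mul_nonneg hπ.1 hq₂) (mul_nonneg h1π hq₁),
    ofReal_le_ofReal_iff (add_nonneg (mul_nonneg hπ.1 hq₂) (mul_nonneg h1π hq₁))] at hle
  linarith

theorem superpred_northeast_of_pi_shift_general (l : ℝ → Bool → ℝ≥0∞) (η : ℝ) (hη : 0 < η)
    (hproper : IsProper l) (hmix : Mixable η l)
    (hfin : ∀ γ ∈ Ioo (0:ℝ) 1, ∀ ω : Bool, l γ ω ≠ ⊤) :
    ∀ π ∈ Ioo (0:ℝ) 1, ∀ p ∈ Superpred l,
      (1 - π) * Real.exp (-η * (p.1 - (l π false).toReal)) +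
        π * Real.exp (-η * (p.2 - (l π true).toReal)) ≤ 1 := by
  intro π hπ p hp
  have hπ' : π ∈ Icc (0:ℝ) 1 := Ioo_subset_Icc_self hπ
  obtain ⟨h₀, h₁⟩ : l π false ≠ ⊤ ∧ l π true ≠ ⊤ := ⟨hfin π hπ false, hfin π hπ true⟩
  set E : ℝ × ℝ → ℝ × ℝ := fun p => (Real.exp (-η * p.1), Real.exp (-η * p.2))
  have hmax : IsMaxOn (fun z : ℝ × ℝ => (1 - π) * Real.log z.1 + π * Real.log z.2)
      (E '' Superpred l) (E ((l π false).toReal, (l π true).toReal)) := by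
    rintro _ ⟨q, hq, rfl⟩
    have hle := mul_le_mul_of_nonneg_left (hproper.weighted_toReal_le hπ' h₀ h₁ hq) hη.le
    simp only [E, mem_ofPred_eq, Real.log_exp]
    linarith
  have hratio := hmix.weighted_ratio_le_of_isMaxOn_weighted_log
    (mem_image_of_mem E (toReal_mem_superpred_s10 hπ' h₀ h₁))
    (mem_image_of_mem E hp) (Real.exp_pos _).ne' (Real.exp_pos _).ne' hmax
  simpa only [E, mul_sub, Real.exp_sub, sub_add_cancel] using hratio

/-- Lemma 2 of the paper ("only if" direction): for an `η`-mixable proper loss function,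
for each `π ∈ (0,1)` the superprediction set lies Northeast of the shift of
`e^{-ηx} + e^{-ηy} = 1` whose `π`-point is `(λ(π,0), λ(π,1))`; equivalently every
`(x,y) ∈ Σ_λ` satisfies `(1-π)·e^{-η(x-λ(π,0))} + π·e^{-η(y-λ(π,1))} ≤ 1`. -/
theorem superpred_northeast_of_pi_shift (l : ℝ → Bool → ℝ≥0∞) (η : ℝ) (hη : 0 < η)
    (hproper : IsProper l) (hmix : Mixable η l)
    (hcont : ∀ ω : Bool, ContinuousOn (fun γ : ℝ => l γ ω) (Icc (0:ℝ) 1))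
    (hfin : ∀ γ ∈ Ioo (0:ℝ) 1, ∀ ω : Bool, l γ ω ≠ ⊤) :
    ∀ π ∈ Ioo (0:ℝ) 1, ∀ p ∈ Superpred l,
      (1 - π) * Real.exp (-η * (p.1 - (l π false).toReal)) +
        π * Real.exp (-η * (p.2 - (l π true).toReal)) ≤ 1 :=
  superpred_northeast_of_pi_shift_general l η hη hproper hmix hfin
end

section
/- Let S be a forecast-continuous game-theoretic supermartingale. For any history h = (e₁,π₁,ω₁,...,e_{T-1},π_{T-1},ω_{T-1}) and any e_T ∈ E, there exists π ∈ [0,1] such that for both ω = 0 and ω = 1, S(h, e_T, π, ω) ≤ S(h). -/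
open Set

/-- A game-theoretic supermartingale with values in `(-∞,∞]`. -/
def IsSupermartingale {E : Type*} (S : List (E × ℝ × Bool) → EReal) : Prop :=
  ∀ (h : List (E × ℝ × Bool)) (e : E), ∀ π ∈ Set.Icc (0:ℝ) 1,
    (π : EReal) * S (h ++ [(e, π, true)]) +
      ((1 - π : ℝ) : EReal) * S (h ++ [(e, π, false)]) ≤ S h

/-- A function on histories is forecast-continuous if it is continuous in the last
prediction. -/
def ForecastContinuous {E : Type*} (S : List (E × ℝ × Bool) → EReal) : Prop :=
  ∀ (h : List (E × ℝ × Bool)) (e : E) (ω : Bool),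
    ContinuousOn (fun π : ℝ => S (h ++ [(e, π, ω)])) (Icc (0:ℝ) 1)

/-!
The sets `A = {π | S(h,e,π,1) ≤ S(h)}` and `B = {π | S(h,e,π,0) ≤ S(h)}` are relatively closed
in `[0,1]` by forecast continuity. The supermartingale inequality puts `1` in `A` and `0` in `B`,
and it also shows that `A ∪ B = [0,1]`, because a convex combination of two values strictly
above `S(h)` stays strictly above it, even among extended reals. Connectedness of `[0,1]` makes `A ∩ B`
nonempty.
-/

theorem EReal.lt_convex_combination {c x y : EReal} {t : ℝ} (ht₀ : 0 ≤ t) (ht₁ : t ≤ 1)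
    (hx : c < x) (hy : c < y) : c < (t : EReal) * x + ((1 - t : ℝ) : EReal) * y := by
  obtain ⟨r, hcr, hrx⟩ := EReal.exists_between_coe_real hx
  obtain ⟨s, hcs, hsy⟩ := EReal.exists_between_coe_real hy
  have hmin : min r s ≤ t * r + (1 - t) * s := by
    nlinarith [min_le_left r s, min_le_right r s]
  have hc_min : c < ((min r s : ℝ) : EReal) := by
    rcases min_choice r s with hm | hm <;> rw [hm] <;> assumption
  calc c < ((min r s : ℝ) : EReal) := hc_min
    _ ≤ ((t * r + (1 - t) * s : ℝ) : EReal) := EReal.coe_le_coe_iff.2 hmin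
    _ = (t : EReal) * r + ((1 - t : ℝ) : EReal) * s := by push_cast; rfl
    _ ≤ (t : EReal) * x + ((1 - t : ℝ) : EReal) * y :=
      add_le_add (mul_le_mul_of_nonneg_left hrx.le (EReal.coe_nonneg.2 ht₀))
        (mul_le_mul_of_nonneg_left hsy.le (EReal.coe_nonneg.2 (_root_.sub_nonneg.2 ht₁)))

theorem IsPreconnected.exists_le_and_le {X α : Type*} [TopologicalSpace X] [TopologicalSpace α]
    [Preorder α] [ClosedIicTopology α] {s : Set X} (hs : IsPreconnected s) {f g : X → α}
    (hf : ContinuousOn f s) (hg : ContinuousOn g s) {c : α} {a b : X} (ha : a ∈ s) (hb : b ∈ s)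
    (hfa : f a ≤ c) (hgb : g b ≤ c) (hcover : ∀ x ∈ s, f x ≤ c ∨ g x ≤ c) :
    ∃ x ∈ s, f x ≤ c ∧ g x ≤ c := by
  obtain ⟨u, hu, hfu⟩ := continuousOn_iff_isClosed.1 hf (Iic c) isClosed_Iic
  obtain ⟨v, hv, hgv⟩ := continuousOn_iff_isClosed.1 hg (Iic c) isClosed_Iic
  have mem_u {x} (hx : x ∈ s) : x ∈ u ↔ f x ≤ c := by
    simpa [hx] using (Set.ext_iff.1 hfu x).symm
  have mem_v {x} (hx : x ∈ s) : x ∈ v ↔ g x ≤ c := by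
    simpa [hx] using (Set.ext_iff.1 hgv x).symm
  obtain ⟨x, hx, hxu, hxv⟩ := isPreconnected_closed_iff.1 hs u v hu hv
    (fun x hx => (hcover x hx).imp (mem_u hx).2 (mem_v hx).2)
    ⟨a, ha, (mem_u ha).2 hfa⟩ ⟨b, hb, (mem_v hb).2 hgb⟩
  exact ⟨x, hx, (mem_u hx).1 hxu, (mem_v hx).1 hxv⟩

theorem IsSupermartingale.le_or_le {E : Type*} {S : List (E × ℝ × Bool) → EReal}
    (hsm : IsSupermartingale S) (h : List (E × ℝ × Bool)) (e : E) {π : ℝ}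
    (hπ : π ∈ Icc (0:ℝ) 1) :
    S (h ++ [(e, π, true)]) ≤ S h ∨ S (h ++ [(e, π, false)]) ≤ S h := by
  by_contra! hgt
  exact (EReal.lt_convex_combination hπ.1 hπ.2 hgt.1 hgt.2).not_ge (hsm h e π hπ)

theorem IsSupermartingale.apply_one_le {E : Type*} {S : List (E × ℝ × Bool) → EReal}
    (hsm : IsSupermartingale S) (h : List (E × ℝ × Bool)) (e : E) :
    S (h ++ [(e, 1, true)]) ≤ S h := by
  simpa using hsm h e 1 (right_mem_Icc.2 zero_le_one)

theorem IsSupermartingale.apply_zero_le {E : Type*} {S : List (E × ℝ × Bool) → EReal}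
    (hsm : IsSupermartingale S) (h : List (E × ℝ × Bool)) (e : E) :
    S (h ++ [(e, 0, false)]) ≤ S h := by
  simpa using hsm h e 0 (left_mem_Icc.2 zero_le_one)

theorem exists_nonincreasing_prediction_general {E : Type*}
    (S : List (E × ℝ × Bool) → EReal)
    (hsm : IsSupermartingale S) (hfc : ForecastContinuous S)
    (h : List (E × ℝ × Bool)) (e : E) :
    ∃ π ∈ Icc (0:ℝ) 1,
      S (h ++ [(e, π, false)]) ≤ S h ∧ S (h ++ [(e, π, true)]) ≤ S h :=
  isPreconnected_Icc.exists_le_and_le (hfc h e false) (hfc h e true)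
    (left_mem_Icc.2 zero_le_one) (right_mem_Icc.2 zero_le_one)
    (hsm.apply_zero_le h e) (hsm.apply_one_le h e) fun _ hπ => (hsm.le_or_le h e hπ).symm

/-- Lemma 1 of the paper: for a forecast-continuous supermartingale, given any history and
any current expert move, there is a prediction `π ∈ [0,1]` which precludes the
supermartingale from growing, whatever the outcome. -/
theorem exists_nonincreasing_prediction {E : Type*}
    (S : List (E × ℝ × Bool) → EReal)
    (hbot : ∀ h, S h ≠ ⊥)
    (hsm : IsSupermartingale S) (hfc : ForecastContinuous S)
    (h : List (E × ℝ × Bool)) (e : E) :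
    ∃ π ∈ Icc (0:ℝ) 1,
      S (h ++ [(e, π, false)]) ≤ S h ∧ S (h ++ [(e, π, true)]) ≤ S h :=
  exists_nonincreasing_prediction_general S hsm hfc h e
end

section
/- Let η > 0 and let λ be η-mixable. For any k ≥ 1, weights u₁,...,u_k ≥ 0 summing to 1, and predictions γ₁,...,γ_k ∈ [0,1], there exists γ ∈ [0,1] such that for both ω = 0 and ω = 1: e^{-η·λ(γ,ω)} ≥ Σᵢ uᵢ·e^{-η·λ(γᵢ,ω)}. -/
open ENNReal Set Finset

/-- `x ↦ e^{-ηx}` on `[0,∞]`, with the convention `e^{-η·∞} = 0`. -/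
noncomputable def expNeg (η : ℝ) (x : ℝ≥0∞) : ℝ :=
  if x = ⊤ then 0 else Real.exp (-η * x.toReal)

/-- The superprediction set of a loss function, as a subset of `[0,∞]²`. -/
def SuperpredE (l : ℝ → Bool → ℝ≥0∞) : Set (ℝ≥0∞ × ℝ≥0∞) :=
  {p | ∃ γ ∈ Set.Icc (0:ℝ) 1, l γ false ≤ p.1 ∧ l γ true ≤ p.2}

/-- `l` is `η`-mixable if the image of its superprediction set under
`E_η(x,y) = (e^{-ηx}, e^{-ηy})` is convex. -/
def MixableE (η : ℝ) (l : ℝ → Bool → ℝ≥0∞) : Prop :=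
  Convex ℝ ((fun p : ℝ≥0∞ × ℝ≥0∞ => (expNeg η p.1, expNeg η p.2)) '' SuperpredE l)

/-! Every exponentiated loss vector `E_η(λ(γᵢ,·))` lies in `E_η(Σ_λ)`, so by convexity so does
their `u`-mixture; it is therefore `E_η` of a point dominating `λ(γ,·)` for some prediction `γ`,
and `E_η` is antitone. -/

lemma expNeg_antitone {η : ℝ} (hη : 0 ≤ η) : Antitone (expNeg η) := by
  intro x y hxy
  unfold expNeg
  split_ifs with hy hx hx
  · exact le_rfl
  · positivity
  · exact absurd (top_le_iff.mp (hx ▸ hxy)) hy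
  · exact Real.exp_le_exp.mpr <| mul_le_mul_of_nonpos_left
      ((ENNReal.toReal_le_toReal hx hy).mpr hxy) (neg_nonpos.mpr hη)

lemma loss_mem_superpredE (l : ℝ → Bool → ℝ≥0∞) {γ : ℝ} (hγ : γ ∈ Icc (0:ℝ) 1) :
    (l γ false, l γ true) ∈ SuperpredE l :=
  ⟨γ, hγ, le_rfl, le_rfl⟩

theorem substitution_exists_general (l : ℝ → Bool → ℝ≥0∞) (η : ℝ) (hη : 0 < η)
    (hmix : MixableE η l) (k : ℕ)
    (u : Fin k → ℝ) (hu : ∀ i, 0 ≤ u i) (husum : ∑ i, u i = 1)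
    (g : Fin k → ℝ) (hg : ∀ i, g i ∈ Icc (0:ℝ) 1) :
    ∃ γ ∈ Icc (0:ℝ) 1, ∀ ω : Bool,
      ∑ i, u i * expNeg η (l (g i) ω) ≤ expNeg η (l γ ω) := by
  obtain ⟨p, ⟨γ, hγ, h_false, h_true⟩, hp⟩ :=
    hmix.sum_mem (fun i _ => hu i) husum fun i _ =>
      mem_image_of_mem _ (loss_mem_superpredE l (hg i))
  simp only [Prod.ext_iff, Prod.fst_sum, Prod.snd_sum, Prod.smul_mk, smul_eq_mul] at hp
  refine ⟨γ, hγ, fun ω => ?_⟩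
  cases ω
  · exact hp.1 ▸ expNeg_antitone hη.le h_false
  · exact hp.2 ▸ expNeg_antitone hη.le h_true

/-- Existence of a substitution function for an `η`-mixable loss function: any convex
mixture of the exponentiated losses of finitely many predictions is dominated by the
exponentiated loss of a single prediction. -/
theorem substitution_exists (l : ℝ → Bool → ℝ≥0∞) (η : ℝ) (hη : 0 < η)
    (hmix : MixableE η l) (k : ℕ) (hk : 1 ≤ k)
    (u : Fin k → ℝ) (hu : ∀ i, 0 ≤ u i) (husum : ∑ i, u i = 1)
    (g : Fin k → ℝ) (hg : ∀ i, g i ∈ Icc (0:ℝ) 1) :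
    ∃ γ ∈ Icc (0:ℝ) 1, ∀ ω : Bool,
      ∑ i, u i * expNeg η (l (g i) ω) ≤ expNeg η (l γ ω) :=
  substitution_exists_general l η hη hmix k u hu husum g hg
end

section
/- Consider the Aggregating Algorithm for specialist (sleeping) experts with η-mixable loss λ, prior weights pⁿ > 0 summing to 1, and a substitution function Σ satisfying the mixability inequality. Then for the weights wⁿ_t updated as wⁿ_t = wⁿ_{t-1}·exp(η(λ(π_t,ω_t) - λ(γⁿ_t,ω_t))) when expert n is awake at step t and wⁿ_t = wⁿ_{t-1} otherwise, the total weight Σₙ wⁿ_t is non-increasing in t. -/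
open Finset

/-!
Write `S = ∑_{n awake} wⁿ`. Multiplying the mixability inequality by `S` gives
`∑_{n awake} wⁿ e^{-ηλ(γⁿ,ω)} ≤ S e^{-ηλ(π,ω)}`, and multiplying by `e^{ηλ(π,ω)}` says exactly
that the updated weights of the awake experts sum to at most `S`. Sleeping experts keep their
weights, so the total weight does not increase.
-/

namespace Finset

variable {ι : Type*}

theorem sum_mul_le_of_sum_div_mul_le (s : Finset ι) {w f : ι → ℝ} {c : ℝ}
    (hw : ∀ i ∈ s, 0 ≤ w i) (h : ∑ i ∈ s, (w i / ∑ j ∈ s, w j) * f i ≤ c) :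
    ∑ i ∈ s, w i * f i ≤ (∑ i ∈ s, w i) * c := by
  by_cases hS : ∑ j ∈ s, w j = 0
  · have hzero : ∀ i ∈ s, w i = 0 := (sum_eq_zero_iff_of_nonneg hw).1 hS
    rw [hS, zero_mul, sum_eq_zero fun i hi => by rw [hzero i hi, zero_mul]]
  · calc ∑ i ∈ s, w i * f i = (∑ j ∈ s, w j) * ∑ i ∈ s, (w i / ∑ j ∈ s, w j) * f i := by
          rw [mul_sum]
          exact sum_congr rfl fun i _ => by field_simp
      _ ≤ (∑ j ∈ s, w j) * c := mul_le_mul_of_nonneg_left h (sum_nonneg hw)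

theorem sum_ite_mem_le_sum {M : Type*} [AddCommMonoid M] [PartialOrder M]
    [IsOrderedAddMonoid M] [Fintype ι] [DecidableEq ι] (s : Finset ι) {f w : ι → M}
    (h : ∑ i ∈ s, f i ≤ ∑ i ∈ s, w i) :
    ∑ i, (if i ∈ s then f i else w i) ≤ ∑ i, w i := by
  rw [← sum_add_sum_compl s, ← sum_add_sum_compl s w,
    sum_congr rfl fun i hi => if_pos hi, sum_congr rfl fun i hi => if_neg (mem_compl.1 hi)]
  exact add_le_add_left h _

end Finset

section Specialists

variable {ι : Type*}

theorem sum_mul_exp_loss_sub_le (s : Finset ι) {w ℓ : ι → ℝ} {η L : ℝ}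
    (hw : ∀ i ∈ s, 0 ≤ w i)
    (hmix : ∑ i ∈ s, (w i / ∑ j ∈ s, w j) * Real.exp (-η * ℓ i) ≤ Real.exp (-η * L)) :
    ∑ i ∈ s, w i * Real.exp (η * (L - ℓ i)) ≤ ∑ i ∈ s, w i :=
  calc ∑ i ∈ s, w i * Real.exp (η * (L - ℓ i))
      = Real.exp (η * L) * ∑ i ∈ s, w i * Real.exp (-η * ℓ i) := by
        rw [mul_sum]
        refine sum_congr rfl fun i _ => ?_
        rw [show η * (L - ℓ i) = η * L + -η * ℓ i by ring, Real.exp_add]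
        ring
    _ ≤ Real.exp (η * L) * ((∑ i ∈ s, w i) * Real.exp (-η * L)) :=
        mul_le_mul_of_nonneg_left (sum_mul_le_of_sum_div_mul_le s hw hmix) (Real.exp_pos _).le
    _ = ∑ i ∈ s, w i := by
        rw [mul_left_comm, ← Real.exp_add, show η * L + -η * L = 0 by ring, Real.exp_zero,
          mul_one]

theorem sum_specialist_update_le [Fintype ι] [DecidableEq ι] (s : Finset ι) {w ℓ : ι → ℝ}
    {η L : ℝ} (hw : ∀ i, 0 ≤ w i)
    (hmix : ∑ i ∈ s, (w i / ∑ j ∈ s, w j) * Real.exp (-η * ℓ i) ≤ Real.exp (-η * L)) :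
    ∑ i, (if i ∈ s then w i * Real.exp (η * (L - ℓ i)) else w i) ≤ ∑ i, w i :=
  sum_ite_mem_le_sum s (sum_mul_exp_loss_sub_le s (fun i _ => hw i) hmix)

end Specialists

theorem total_weight_nonincreasing_general (N : ℕ) (l : ℝ → Bool → ℝ) (η : ℝ)
    (p : Fin N → ℝ) (hp : ∀ n, 0 < p n)
    (A : ℕ → Finset (Fin N))
    (γ : ℕ → Fin N → ℝ) (ω : ℕ → Bool) (π : ℕ → ℝ)
    (w : ℕ → Fin N → ℝ)
    (hw0 : ∀ n, w 0 n = p n)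
    (hsub : ∀ (t : ℕ) (b : Bool),
      ∑ n ∈ A t, (w t n / ∑ m ∈ A t, w t m) * Real.exp (-η * l (γ t n) b)
        ≤ Real.exp (-η * l (π t) b))
    (hupd : ∀ t n, w (t + 1) n =
      if n ∈ A t then w t n * Real.exp (η * (l (π t) (ω t) - l (γ t n) (ω t)))
      else w t n) :
    ∀ t : ℕ, ∑ n, w (t + 1) n ≤ ∑ n, w t n := by
  have hw_nonneg : ∀ t n, 0 ≤ w t n := by
    intro t
    induction t with
    | zero => exact fun n => hw0 n ▸ (hp n).le
    | succ t ih =>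
      intro n
      rw [hupd]
      split_ifs
      · exact mul_nonneg (ih n) (Real.exp_pos _).le
      · exact ih n
  intro t
  simp only [hupd t]
  exact sum_specialist_update_le (A t) (hw_nonneg t) (hsub t (ω t))

/-- In the Aggregating Algorithm for specialist (sleeping) experts, the total weight
`∑ₙ wⁿ_t` is non-increasing in `t`: at each step the prediction `π_t` obtained from a
substitution function satisfies the mixability inequality, the weights of awake experts
are multiplied by `e^{η(λ(π_t,ω_t)-λ(γⁿ_t,ω_t))}`, and sleeping experts keep their
weights. -/
theorem total_weight_nonincreasing (N : ℕ) (l : ℝ → Bool → ℝ) (η : ℝ) (hη : 0 < η)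
    (p : Fin N → ℝ) (hp : ∀ n, 0 < p n) (hpsum : ∑ n, p n = 1)
    (A : ℕ → Finset (Fin N)) (hA : ∀ t, (A t).Nonempty)
    (γ : ℕ → Fin N → ℝ) (ω : ℕ → Bool) (π : ℕ → ℝ)
    (w : ℕ → Fin N → ℝ)
    (hw0 : ∀ n, w 0 n = p n)
    (hsub : ∀ (t : ℕ) (b : Bool),
      ∑ n ∈ A t, (w t n / ∑ m ∈ A t, w t m) * Real.exp (-η * l (γ t n) b)
        ≤ Real.exp (-η * l (π t) b))
    (hupd : ∀ t n, w (t + 1) n =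
      if n ∈ A t then w t n * Real.exp (η * (l (π t) (ω t) - l (γ t n) (ω t)))
      else w t n) :
    ∀ t : ℕ, ∑ n, w (t + 1) n ≤ ∑ n, w t n :=
  total_weight_nonincreasing_general N l η p hp A γ ω π w hw0 hsub hupd
end

section
/- In the specialist-experts Aggregating Algorithm with η-mixable loss λ and uniform prior weights pⁿ = 1/N, for every T and every expert n, the learner's loss over the steps when expert n is awake satisfies Σ_{t ≤ T, n ∈ A_t} λ(π_t,ω_t) ≤ Σ_{t ≤ T, n ∈ A_t} λ(γⁿ_t,ω_t) + (ln N)/η. -/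
open Finset

/-!
Expert `n`'s weight after `T` steps is `(1/N) · exp (η · R)`, where `R` is the learner's excess
loss over expert `n` on the steps when `n` was awake. Mixability (the substitution inequality)
says exactly that one update cannot increase the total weight of the awake experts, and the
sleeping ones keep their weights, so the total weight stays at most its initial value `1`.
Hence `(1/N) · exp (η · R) ≤ 1`, i.e. `R ≤ (ln N)/η`.
-/

theorem sum_mul_exp_le_sum_of_mixable {ι : Type*} (s : Finset ι) (w ℓ : ι → ℝ) (η L : ℝ)
    (hw : ∀ n ∈ s, 0 ≤ w n)
    (hmix : ∑ n ∈ s, (w n / ∑ m ∈ s, w m) * Real.exp (-η * ℓ n) ≤ Real.exp (-η * L)) :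
    ∑ n ∈ s, w n * Real.exp (η * (L - ℓ n)) ≤ ∑ n ∈ s, w n := by
  set S := ∑ m ∈ s, w m
  have hfactor : ∑ n ∈ s, w n * Real.exp (η * (L - ℓ n))
      = Real.exp (η * L) * ∑ n ∈ s, w n * Real.exp (-η * ℓ n) := by
    rw [mul_sum]
    refine sum_congr rfl fun n _ => ?_
    rw [mul_sub, sub_eq_add_neg, Real.exp_add, ← neg_mul]
    ring
  rcases (sum_nonneg hw).eq_or_lt with hS | hS
  · have hzero : ∀ n ∈ s, w n = 0 := (sum_eq_zero_iff_of_nonneg hw).1 hS.symm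
    rw [sum_eq_zero fun n hn => by rw [hzero n hn, zero_mul]]
    exact hS.le
  · have hmix' : ∑ n ∈ s, w n * Real.exp (-η * ℓ n) ≤ S * Real.exp (-η * L) := by
      rw [← div_le_iff₀' hS, sum_div]
      simpa only [div_mul_eq_mul_div] using hmix
    calc ∑ n ∈ s, w n * Real.exp (η * (L - ℓ n))
        ≤ Real.exp (η * L) * (S * Real.exp (-η * L)) := by
          rw [hfactor]; gcongr
      _ = S := by
          rw [mul_left_comm, neg_mul, ← Real.exp_add, add_neg_cancel, Real.exp_zero, mul_one]

theorem sum_ite_mem_le_sum {ι : Type*} [Fintype ι] [DecidableEq ι] (s : Finset ι)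
    (a w : ι → ℝ) (h : ∑ n ∈ s, a n ≤ ∑ n ∈ s, w n) :
    ∑ n, (if n ∈ s then a n else w n) ≤ ∑ n, w n := by
  rw [sum_ite, ← sum_filter_add_sum_filter_not univ (· ∈ s) w]
  simp only [filter_mem_eq_inter, univ_inter]
  gcongr

theorem eq_mul_exp_sum_filter_of_succ (f g : ℕ → ℝ) (p : ℕ → Prop) [DecidablePred p]
    (hf : ∀ t, f (t + 1) = if p t then f t * Real.exp (g t) else f t) (T : ℕ) :
    f T = f 0 * Real.exp (∑ t ∈ (range T).filter p, g t) := by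
  induction T with
  | zero => simp
  | succ T ih =>
    rw [hf, range_add_one, filter_insert]
    split_ifs with hT
    · rw [sum_insert (by simp), Real.exp_add, ih, mul_assoc, mul_comm (Real.exp _)]
    · exact ih

theorem le_log_div_of_mul_exp_le_one {N η D : ℝ} (hN : 0 < N) (hη : 0 < η)
    (h : 1 / N * Real.exp (η * D) ≤ 1) : D ≤ Real.log N / η := by
  rw [le_div_iff₀ hη, mul_comm, Real.le_log_iff_exp_le hN]
  rwa [one_div, inv_mul_le_iff₀ hN, mul_one] at h

theorem specialist_regret_bound_general (N : ℕ) (l : ℝ → Bool → ℝ) (η : ℝ)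
    (hη : 0 < η)
    (A : ℕ → Finset (Fin N))
    (γ : ℕ → Fin N → ℝ) (ω : ℕ → Bool) (π : ℕ → ℝ)
    (w : ℕ → Fin N → ℝ)
    (hw0 : ∀ n, w 0 n = 1 / N)
    (hsub : ∀ (t : ℕ) (b : Bool),
      ∑ n ∈ A t, (w t n / ∑ m ∈ A t, w t m) * Real.exp (-η * l (γ t n) b)
        ≤ Real.exp (-η * l (π t) b))
    (hupd : ∀ t n, w (t + 1) n =
      if n ∈ A t then w t n * Real.exp (η * (l (π t) (ω t) - l (γ t n) (ω t)))
      else w t n) :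
    ∀ (T : ℕ) (n : Fin N),
      ∑ t ∈ (range T).filter (fun t => n ∈ A t), l (π t) (ω t)
        ≤ ∑ t ∈ (range T).filter (fun t => n ∈ A t), l (γ t n) (ω t)
          + Real.log N / η := by
  intro T n
  have hN : (0 : ℝ) < N := by exact_mod_cast n.pos
  have hclosed : ∀ t m, w t m = 1 / N * Real.exp
      (η * ∑ s ∈ (range t).filter (fun s => m ∈ A s), (l (π s) (ω s) - l (γ s m) (ω s))) :=
    fun t m => by
    rw [eq_mul_exp_sum_filter_of_succ (w · m) _ _ (fun t => hupd t m) t, hw0, mul_sum]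
  have hnonneg : ∀ t m, 0 ≤ w t m := fun t m => by rw [hclosed]; positivity
  have hmass : Antitone fun t => ∑ m, w t m := antitone_nat_of_succ_le fun t => by
    simp only [hupd]
    exact sum_ite_mem_le_sum _ _ _ <| sum_mul_exp_le_sum_of_mixable _ _ _ _ _
      (fun m _ => hnonneg t m) (hsub t (ω t))
  have hmass0 : ∑ m, w 0 m = 1 := by simp [hw0, hN.ne']
  have hwT : w T n ≤ 1 :=
    (single_le_sum (fun m _ => hnonneg T m) (mem_univ n)).trans (hmass0 ▸ hmass T.zero_le)
  rw [hclosed, sum_sub_distrib] at hwT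
  linarith [le_log_div_of_mul_exp_le_one hN hη hwT]

/-- Corollary 4 of the paper (with uniform prior): the Aggregating Algorithm for
specialist (sleeping) experts with an `η`-mixable loss guarantees, for every horizon `T`
and every expert `n`, that the learner's cumulative loss over the steps when expert `n`
is awake exceeds expert `n`'s cumulative loss by at most `(ln N)/η`. -/
theorem specialist_regret_bound (N : ℕ) (hN : 0 < N) (l : ℝ → Bool → ℝ) (η : ℝ)
    (hη : 0 < η)
    (A : ℕ → Finset (Fin N)) (hA : ∀ t, (A t).Nonempty)
    (γ : ℕ → Fin N → ℝ) (ω : ℕ → Bool) (π : ℕ → ℝ)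
    (w : ℕ → Fin N → ℝ)
    (hw0 : ∀ n, w 0 n = 1 / N)
    (hsub : ∀ (t : ℕ) (b : Bool),
      ∑ n ∈ A t, (w t n / ∑ m ∈ A t, w t m) * Real.exp (-η * l (γ t n) b)
        ≤ Real.exp (-η * l (π t) b))
    (hupd : ∀ t n, w (t + 1) n =
      if n ∈ A t then w t n * Real.exp (η * (l (π t) (ω t) - l (γ t n) (ω t)))
      else w t n) :
    ∀ (T : ℕ) (n : Fin N),
      ∑ t ∈ (range T).filter (fun t => n ∈ A t), l (π t) (ω t)
        ≤ ∑ t ∈ (range T).filter (fun t => n ∈ A t), l (γ t n) (ω t)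
          + Real.log N / η :=
  specialist_regret_bound_general N l η hη A γ ω π w hw0 hsub hupd
end
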